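/- arXiv:2406.07416 — 4 statements merged into one kernel-verified Lean document; each statement's English description precedes it below -/
import Mathlib

section
/- The Parry measure μ on Σ_A, determined by μ(C(α)) = v_{α_1} u_{α_n} / λ_max^{n-1} for admissible words α = α_1...α_n, is Ahlfors δ-regular for δ = log_λ(λ_max): there exists C ≥ 1 such that C^{-1} r^δ ≤ μ(B(x,r)) ≤ C r^δ for all x ∈ Σ_A and 0 < r ≤ 1. -/
/-!
The closed ball of radius `λ⁻¹ ^ m` about `x` is exactly the cylinder of the first `m` symbols
of `x`, and since `u` and `v` are bounded above and below by positive constants, the measure of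
such a cylinder is comparable to `λ_max⁻¹ ^ m = (λ⁻¹ ^ m) ^ δ`. A radius `r ∈ (0, 1]` lies
between two consecutive powers `λ⁻¹ ^ (m + 1) < r ≤ λ⁻¹ ^ m`, so its ball is squeezed between
two cylinders of comparable measure.
-/

open MeasureTheory

/-- The one-sided shift space of the {0,1}-matrix A. -/
def SigmaA {N : ℕ} (A : Matrix (Fin N) (Fin N) ℝ) :=
  {x : ℕ → Fin N // ∀ n, A (x n) (x (n + 1)) = 1}

open Set ENNReal

namespace SigmaA

variable {N : ℕ} {A : Matrix (Fin N) (Fin N) ℝ}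

def cylinder (x : SigmaA A) (m : ℕ) : Set (SigmaA A) :=
  {y | ∀ i < m, y.1 i = x.1 i}

@[simp]
lemma cylinder_zero (x : SigmaA A) : x.cylinder 0 = univ := by
  simp [cylinder]

lemma setOf_le_inv_pow_eq_cylinder {lam : ℝ} (hlam : 1 < lam) {d : SigmaA A → SigmaA A → ℝ}
    (hd0 : ∀ x, d x x = 0)
    (hd : ∀ x y (h : x.1 ≠ y.1), d x y = lam ^ (-(Nat.find (Function.ne_iff.mp h) : ℤ)))
    (x : SigmaA A) (m : ℕ) : {y | d x y ≤ lam⁻¹ ^ m} = x.cylinder m := by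
  ext y
  by_cases hxy : x.1 = y.1
  · obtain rfl : x = y := Subtype.ext hxy
    simp [cylinder, hd0, (zero_lt_one.trans hlam).le]
  · rw [mem_ofPred_eq, hd x y hxy, zpow_neg, zpow_natCast, ← inv_pow,
      pow_le_pow_iff_right_of_lt_one₀ (inv_pos.2 (zero_lt_one.trans hlam))
        (inv_lt_one_of_one_lt₀ hlam), Nat.le_find_iff]
    simp only [cylinder, mem_ofPred_eq, ne_eq, not_not, eq_comm]

section ParryMeasure

variable [MeasurableSpace (SigmaA A)]

def IsParryMeasure (μ : Measure (SigmaA A)) (u v : Fin N → ℝ) (lamMax : ℝ) : Prop :=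
  ∀ (m : ℕ) (w : ℕ → Fin N), (∀ i, i + 1 ≤ m → A (w i) (w (i + 1)) = 1) →
    μ {x : SigmaA A | ∀ i ≤ m, x.1 i = w i} =
      ENNReal.ofReal (v (w 0) * u (w m) / lamMax ^ m)

variable {μ : Measure (SigmaA A)} {u v : Fin N → ℝ} {lamMax : ℝ}

lemma measure_cylinder_succ (hμ : IsParryMeasure μ u v lamMax) (x : SigmaA A) (m : ℕ) :
    μ (x.cylinder (m + 1)) = ENNReal.ofReal (v (x.1 0) * u (x.1 m) / lamMax ^ m) := by
  simpa only [cylinder, Nat.lt_succ_iff] using hμ m x.1 fun i _ => x.2 i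

lemma measure_univ_le (hμ : IsParryMeasure μ u v lamMax) (hu : ∀ i, 0 ≤ u i)
    (hv : ∀ i, 0 ≤ v i) : μ univ ≤ ENNReal.ofReal ((∑ i, v i) * ∑ i, u i) := by
  have hcover : (univ : Set (SigmaA A)) = ⋃ j, {x : SigmaA A | ∀ i ≤ 0, x.1 i = j} := by
    ext x
    simp
  calc μ univ ≤ ∑ j, μ {x : SigmaA A | ∀ i ≤ 0, x.1 i = j} :=
        hcover ▸ measure_iUnion_fintype_le μ _
    _ = ENNReal.ofReal (∑ j, v j * u j) := by
        simp_rw [hμ 0 _ fun i hi => absurd hi (Nat.not_succ_le_zero i), pow_zero, div_one]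
        exact (ENNReal.ofReal_sum_of_nonneg fun j _ => mul_nonneg (hv j) (hu j)).symm
    _ ≤ ENNReal.ofReal ((∑ i, v i) * ∑ i, u i) := by
        rw [Finset.sum_mul]
        gcongr with j
        exacts [hv j, Finset.single_le_sum (fun i _ => hu i) (Finset.mem_univ j)]

lemma measure_cylinder_succ_le (hμ : IsParryMeasure μ u v lamMax) (hlamMax : 0 ≤ lamMax)
    (hu : ∀ i, 0 ≤ u i) (hv : ∀ i, 0 ≤ v i) (x : SigmaA A) (m : ℕ) :
    μ (x.cylinder (m + 1)) ≤ ENNReal.ofReal ((∑ i, v i) * (∑ i, u i) / lamMax ^ m) := by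
  rw [measure_cylinder_succ hμ]
  refine ofReal_le_ofReal (div_le_div_of_nonneg_right ?_ (pow_nonneg hlamMax m))
  exact mul_le_mul (Finset.single_le_sum (fun i _ => hv i) (Finset.mem_univ _))
    (Finset.single_le_sum (fun i _ => hu i) (Finset.mem_univ _)) (hu _)
    (Finset.sum_nonneg fun i _ => hv i)

lemma exists_measure_cylinder_le (hμ : IsParryMeasure μ u v lamMax) (hlamMax : 1 ≤ lamMax)
    (hu : ∀ i, 0 ≤ u i) (hv : ∀ i, 0 ≤ v i) :
    ∃ K : ℝ, ∀ (x : SigmaA A) m, μ (x.cylinder m) ≤ ENNReal.ofReal (K * lamMax⁻¹ ^ m) := by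
  have hlamMax0 : lamMax ≠ 0 := (zero_lt_one.trans_le hlamMax).ne'
  have hB : 0 ≤ (∑ i, v i) * ∑ i, u i :=
    mul_nonneg (Finset.sum_nonneg fun i _ => hv i) (Finset.sum_nonneg fun i _ => hu i)
  refine ⟨lamMax * ((∑ i, v i) * ∑ i, u i), fun x m => ?_⟩
  cases m with
  | zero =>
    rw [cylinder_zero, pow_zero, mul_one]
    exact (measure_univ_le hμ hu hv).trans (ofReal_le_ofReal (le_mul_of_one_le_left hB hlamMax))
  | succ m =>
    convert measure_cylinder_succ_le hμ (zero_le_one.trans hlamMax) hu hv x m using 2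
    rw [inv_pow, pow_succ]
    field_simp

lemma exists_le_measure_cylinder_succ (hμ : IsParryMeasure μ u v lamMax) (hlamMax : 0 ≤ lamMax)
    (hu : ∀ i, 0 < u i) (hv : ∀ i, 0 < v i) :
    ∃ c > 0, ∀ (x : SigmaA A) m, ENNReal.ofReal (c * lamMax⁻¹ ^ m) ≤ μ (x.cylinder (m + 1)) := by
  obtain ⟨c, hc, hcvu⟩ := Pi.exists_forall_pos_add_lt (x := 0)
    (y := fun p : Fin N × Fin N => v p.1 * u p.2) fun p => mul_pos (hv p.1) (hu p.2)
  refine ⟨c, hc, fun x m => ?_⟩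
  rw [measure_cylinder_succ hμ, inv_pow, ← div_eq_mul_inv]
  gcongr
  simpa using (hcvu (x.1 0, x.1 m)).le

end ParryMeasure

end SigmaA

lemma exists_inv_pow_bracket {lam lamMax r : ℝ} (hlam : 1 < lam) (hlamMax : 1 ≤ lamMax)
    (hr : 0 < r) (hr1 : r ≤ 1) :
    ∃ m : ℕ, lam⁻¹ ^ (m + 1) < r ∧ r ≤ lam⁻¹ ^ m ∧
      lamMax⁻¹ ^ (m + 1) ≤ r ^ Real.logb lam lamMax ∧ r ^ Real.logb lam lamMax ≤ lamMax⁻¹ ^ m := by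
  have hlam0 : 0 < lam := zero_lt_one.trans hlam
  have hδ : 0 ≤ Real.logb lam lamMax := Real.logb_nonneg hlam hlamMax
  have hpow (n : ℕ) : (lam⁻¹ ^ n) ^ Real.logb lam lamMax = lamMax⁻¹ ^ n := by
    rw [← Real.rpow_pow_comm (inv_nonneg.2 hlam0.le), Real.inv_rpow hlam0.le,
      Real.rpow_logb hlam0 hlam.ne' (zero_lt_one.trans_le hlamMax)]
  obtain ⟨m, hlt, hle⟩ :=
    exists_nat_pow_near_of_lt_one hr hr1 (inv_pos.2 hlam0) (inv_lt_one_of_one_lt₀ hlam)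
  refine ⟨m, hlt, hle, ?_, ?_⟩
  · exact hpow (m + 1) ▸ Real.rpow_le_rpow (by positivity) hlt.le hδ
  · exact hpow m ▸ Real.rpow_le_rpow hr.le hle hδ

theorem parry_ahlfors_regular_general (N : ℕ) (A : Matrix (Fin N) (Fin N) ℝ)
    (lam : ℝ) (hlam : 1 < lam)
    (u v : Fin N → ℝ) (lamMax : ℝ) (hlamMax : 1 < lamMax)
    (hu : ∀ i, 0 < u i) (hv : ∀ i, 0 < v i)
    [MeasurableSpace (SigmaA A)] (μ : Measure (SigmaA A))
    (hμ : ∀ (m : ℕ) (w : ℕ → Fin N), (∀ i, i + 1 ≤ m → A (w i) (w (i + 1)) = 1) →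
      μ {x : SigmaA A | ∀ i ≤ m, x.1 i = w i} =
        ENNReal.ofReal (v (w 0) * u (w m) / lamMax ^ m))
    (d : SigmaA A → SigmaA A → ℝ) (hd0 : ∀ x, d x x = 0)
    (hd : ∀ x y (h : x.1 ≠ y.1),
      d x y = lam ^ (-(Nat.find (Function.ne_iff.mp h) : ℤ))) :
    ∃ C : ℝ, 1 ≤ C ∧ ∀ (x : SigmaA A) (r : ℝ), 0 < r → r ≤ 1 →
      ENNReal.ofReal (C⁻¹ * r ^ Real.logb lam lamMax) ≤ μ {y | d x y ≤ r} ∧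
      μ {y | d x y ≤ r} ≤ ENNReal.ofReal (C * r ^ Real.logb lam lamMax) := by
  obtain ⟨c, hc, hlow⟩ :=
    SigmaA.exists_le_measure_cylinder_succ hμ (zero_le_one.trans hlamMax.le) hu hv
  obtain ⟨K, hup⟩ :=
    SigmaA.exists_measure_cylinder_le hμ hlamMax.le (fun i => (hu i).le) fun i => (hv i).le
  set C := max 1 (max c⁻¹ (K * lamMax))
  have hC : 0 < C := zero_lt_one.trans_le (le_max_left _ _)
  refine ⟨C, le_max_left _ _, fun x r hr hr1 => ?_⟩
  obtain ⟨m, hlt, hle, hδ_ge, hδ_le⟩ := exists_inv_pow_bracket hlam hlamMax.le hr hr1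
  have hball : x.cylinder (m + 1) ⊆ {y | d x y ≤ r} ∧ {y | d x y ≤ r} ⊆ x.cylinder m := by
    simp only [← SigmaA.setOf_le_inv_pow_eq_cylinder hlam hd0 hd, ofPred_subset_ofPred]
    exact ⟨fun y hy => hy.trans hlt.le, fun y hy => hy.trans hle⟩
  constructor
  · calc ENNReal.ofReal (C⁻¹ * r ^ Real.logb lam lamMax) ≤ ENNReal.ofReal (c * lamMax⁻¹ ^ m) :=
          ofReal_le_ofReal (mul_le_mul ((inv_le_comm₀ hC hc).2 (le_max_of_le_right
            (le_max_left _ _))) hδ_le (by positivity) hc.le)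
      _ ≤ μ {y | d x y ≤ r} := (hlow x m).trans (measure_mono hball.1)
  · calc μ {y | d x y ≤ r} ≤ ENNReal.ofReal (K * lamMax * lamMax⁻¹ ^ (m + 1)) := by
          rw [pow_succ, mul_mul_mul_comm, mul_inv_cancel₀ (zero_lt_one.trans hlamMax).ne',
            mul_one]
          exact (measure_mono hball.2).trans (hup x m)
      _ ≤ ENNReal.ofReal (C * r ^ Real.logb lam lamMax) :=
          ofReal_le_ofReal (mul_le_mul (le_max_of_le_right (le_max_right _ _)) hδ_ge
            (by positivity) hC.le)

/-- The Parry measure μ on Σ_A, determined on cylinders of admissible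
words α = α_0...α_m (length m+1) by μ(C(α)) = v_{α_0} u_{α_m} / λ_max^m, is Ahlfors
δ-regular for δ = log_λ(λ_max): there is C ≥ 1 with
C⁻¹ r^δ ≤ μ(B(x,r)) ≤ C r^δ for all x and 0 < r ≤ 1. -/
theorem parry_ahlfors_regular (N : ℕ) (hN : 2 ≤ N) (A : Matrix (Fin N) (Fin N) ℝ)
    (h01 : ∀ i j, A i j = 0 ∨ A i j = 1)
    (hprim : ∃ k : ℕ, ∀ i j, 0 < (A ^ k) i j)
    (lam : ℝ) (hlam : 1 < lam)
    (u v : Fin N → ℝ) (lamMax : ℝ) (hlamMax : 1 < lamMax)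
    (hu : ∀ i, 0 < u i) (hv : ∀ i, 0 < v i)
    (hAu : ∀ i, ∑ j, A i j * u j = lamMax * u i)
    (hAv : ∀ j, ∑ i, v i * A i j = lamMax * v j)
    (hnorm : ∑ i, u i * v i = 1)
    [MeasurableSpace (SigmaA A)] (μ : Measure (SigmaA A))
    (hμ : ∀ (m : ℕ) (w : ℕ → Fin N), (∀ i, i + 1 ≤ m → A (w i) (w (i + 1)) = 1) →
      μ {x : SigmaA A | ∀ i ≤ m, x.1 i = w i} =
        ENNReal.ofReal (v (w 0) * u (w m) / lamMax ^ m))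
    (d : SigmaA A → SigmaA A → ℝ) (hd0 : ∀ x, d x x = 0)
    (hd : ∀ x y (h : x.1 ≠ y.1),
      d x y = lam ^ (-(Nat.find (Function.ne_iff.mp h) : ℤ))) :
    ∃ C : ℝ, 1 ≤ C ∧ ∀ (x : SigmaA A) (r : ℝ), 0 < r → r ≤ 1 →
      ENNReal.ofReal (C⁻¹ * r ^ Real.logb lam lamMax) ≤ μ {y | d x y ≤ r} ∧
      μ {y | d x y ≤ r} ≤ ENNReal.ofReal (C * r ^ Real.logb lam lamMax) :=
  parry_ahlfors_regular_general N A lam hlam u v lamMax hlamMax hu hv μ hμ d hd0 hd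
end

section
/- Inversion in G_A permutes the pieces of the discretization: for γ = α.β ∈ I_A with β = β̂ b (b the last letter of β), the inverse of G_{α.β} equals G_{β̂.αb}, i.e., (x,n,y) ∈ G_{α.β} if and only if (y,−n,x) ∈ G_{β̂.(αb)}. -/
/-- The shift map on Σ_A. -/
def shiftA {N : ℕ} (A : Matrix (Fin N) (Fin N) ℝ) (x : SigmaA A) : SigmaA A :=
  ⟨fun n => x.1 (n + 1), fun n => x.2 (n + 1)⟩

/-- Admissibility of a finite word. -/
def AdmWord {N : ℕ} (A : Matrix (Fin N) (Fin N) ℝ) (w : List (Fin N)) : Prop :=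
  w.Chain' (fun i j => A i j = 1)

/-- Membership of γ = (α, β) in the index set I_A : α, β admissible, β nonempty, and
either α is empty or A_{last α, last β} = 1. -/
def IdxA {N : ℕ} (A : Matrix (Fin N) (Fin N) ℝ) (α β : List (Fin N)) : Prop :=
  AdmWord A α ∧ AdmWord A β ∧ β ≠ [] ∧
    (α = [] ∨ ∃ (hα : α ≠ []) (hβ : β ≠ []), A (α.getLast hα) (β.getLast hβ) = 1)

/-- Membership of (x,n,y) in the piece G_γ = ℓ⁻¹(γ), γ = α.β : the cocycle value is
n = |α| − |β| + 1, x = α σ^{|β|−1}(y), y = β σ^{|β|}(y), and κ(x,n,y) = |β| − 1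
(i.e. the coincidence σ^{n+k} x = σ^k y holds at k = |β|−1 and at no admissible
smaller k). -/
def InG {N : ℕ} (A : Matrix (Fin N) (Fin N) ℝ) (α β : List (Fin N))
    (x : SigmaA A) (n : ℤ) (y : SigmaA A) : Prop :=
  n = (α.length : ℤ) - (β.length : ℤ) + 1 ∧
  (∀ i (h : i < α.length), x.1 i = α.get ⟨i, h⟩) ∧
  (∀ j, x.1 (α.length + j) = y.1 (β.length - 1 + j)) ∧
  (∀ i (h : i < β.length), y.1 i = β.get ⟨i, h⟩) ∧
  (0 ≤ n + ((β.length : ℤ) - 1) ∧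
    (shiftA A)^[(n + ((β.length : ℤ) - 1)).toNat] x = (shiftA A)^[β.length - 1] y) ∧
  (∀ k : ℕ, k < β.length - 1 → 0 ≤ n + k →
    (shiftA A)^[(n + k).toNat] x ≠ (shiftA A)^[k] y)



/-! The pieces G_{α.β} are cut out by conditions that are symmetric in `x` and `y` once the
letter `b = x_{|α|} = y_{|β|-1}` is moved from the end of `β` to the end of `α`: the coincidence
`σ^{|α|} x = σ^{|β|-1} y` reads the same in both directions, and the minimality of `κ` is
transported by the shift `k ↦ k - n`. Since `(α, β) ↦ (β̂, αb)` is an involution, the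
implication from left to right suffices. -/

def StartsWith {ι : Type*} (s : ℕ → ι) (w : List ι) : Prop :=
  ∀ i (hi : i < w.length), s i = w.get ⟨i, hi⟩

namespace StartsWith

variable {ι : Type*} {s : ℕ → ι} {w : List ι}

theorem dropLast (h : StartsWith s w) : StartsWith s w.dropLast := by
  intro i hi
  rw [List.length_dropLast] at hi
  simp [h i (by omega), List.getElem_dropLast]

theorem concat {b : ι} (h : StartsWith s w) (hb : s w.length = b) :
    StartsWith s (w ++ [b]) := by
  intro i hi
  rw [List.length_append, List.length_singleton] at hi
  rcases Nat.lt_or_ge i w.length with hlt | hge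
  · simp [h i hlt, List.getElem_append_left hlt]
  · obtain rfl : i = w.length := by omega
    simp [hb]

end StartsWith

theorem iterate_ne_iterate_swap {X : Type*} {f : X → X} {x y : X} {n : ℤ} {L : ℕ}
    (h : ∀ k : ℕ, k < L → 0 ≤ n + k → f^[(n + k).toNat] x ≠ f^[k] y) :
    ∀ k : ℕ, (k : ℤ) < n + L → 0 ≤ -n + k → f^[(-n + k).toNat] y ≠ f^[k] x := by
  intro k hk hnk heq
  have hk' : n + ((-n + k).toNat : ℕ) = k := by omega
  exact h (-n + k).toNat (by omega) (by omega) (by rw [hk']; exact heq.symm)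

theorem InG.inv {N : ℕ} {A : Matrix (Fin N) (Fin N) ℝ} {α β : List (Fin N)}
    (hβ : β ≠ []) {x y : SigmaA A} {n : ℤ} (h : InG A α β x n y) :
    InG A β.dropLast (α ++ [β.getLast hβ]) y (-n) x := by
  obtain ⟨hn, hx, hxy, hy, ⟨hnn, hco⟩, hmin⟩ := h
  have hlen : 0 < β.length := List.length_pos_iff.mpr hβ
  have hlast : x.1 α.length = β.getLast hβ := by
    simpa [hy _ (Nat.sub_lt hlen one_pos), List.getLast_eq_getElem] using hxy 0
  have hdrop : β.dropLast.length = β.length - 1 := List.length_dropLast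
  have hconcat : (α ++ [β.getLast hβ]).length = α.length + 1 := by simp
  refine ⟨?_, StartsWith.dropLast hy, fun j => ?_, StartsWith.concat hx hlast, ⟨?_, ?_⟩, ?_⟩
  · rw [hdrop, hconcat]
    omega
  · rw [hdrop, hconcat, Nat.add_sub_cancel]
    exact (hxy j).symm
  · rw [hconcat]
    omega
  · rw [hconcat, Nat.add_sub_cancel,
      (by omega : (-n + (((α.length + 1 : ℕ) : ℤ) - 1)).toNat = β.length - 1)]
    rw [(by omega : (n + ((β.length : ℤ) - 1)).toNat = α.length)] at hco
    exact hco.symm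
  · rw [hconcat, Nat.add_sub_cancel]
    exact fun k hk => iterate_ne_iterate_swap hmin k (by omega)

theorem Ggamma_inversion_general (N : ℕ) (A : Matrix (Fin N) (Fin N) ℝ)
    (α β : List (Fin N)) (hβ : β ≠ []) :
    ∀ (x y : SigmaA A) (n : ℤ),
      InG A α β x n y ↔ InG A β.dropLast (α ++ [β.getLast hβ]) y (-n) x := by
  intro x y n
  refine ⟨InG.inv hβ, fun h => ?_⟩
  have h' := InG.inv (List.concat_ne_nil _ _) h
  rwa [List.dropLast_concat, List.getLast_concat, List.dropLast_append_getLast hβ,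
    neg_neg] at h'

/-- Inversion in G_A permutes the pieces of the discretization: for
γ = α.β ∈ I_A with β = β̂ b (b the last letter of β), one has
(x,n,y) ∈ G_{α.β}  ↔  (y,−n,x) ∈ G_{β̂.(αb)}. -/
theorem Ggamma_inversion (N : ℕ) (A : Matrix (Fin N) (Fin N) ℝ)
    (α β : List (Fin N)) (hβ : β ≠ []) (hγ : IdxA A α β) :
    ∀ (x y : SigmaA A) (n : ℤ),
      InG A α β x n y ↔ InG A β.dropLast (α ++ [β.getLast hβ]) y (-n) x :=
  Ggamma_inversion_general N A α β hβ
end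

section
/- Let A be an N×N primitive {0,1}-matrix and ν an admissible word with |ν| > 3(N+1) whose last letter has at least two admissible successors (#{i : A_{ν_{|ν|}, i} = 1} ≥ 2). Then the number of indices i ∈ {1,...,|ν|−1} with transition probability P_{ν_i, ν_{i+1}} ≠ 1 is strictly greater than |ν| / (3(N+1)). -/
open scoped Classical

/-!
If `P_{i,j} = 1`, then `u > 0` and `A ≥ 0` force the whole sum `∑ₖ A_{i,k} u_k = λ u_i` onto
`k = j`, so `j` is the only successor of `i`. If `N + 1` consecutive transitions of `ν` were all
of this kind, two of the visited letters would coincide and close a cycle of letters with unique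
successors; every power of `A` would then have a row with a single nonzero entry, which
primitivity forbids once `N ≥ 2`. So each block of `N + 1` consecutive indices contains a
transition with `P ≠ 1`, giving at least `(m - 1) / (N + 1)` of them.
-/

open Finset

section UniqueSuccessor

variable {n R : Type*} [Fintype n] [DecidableEq n] [Semiring R] {A : Matrix n n R}

theorem Matrix.exists_mem_forall_pow_apply_eq_zero {S : Set n}
    (hS : ∀ s ∈ S, ∃ s' ∈ S, ∀ t ≠ s', A s t = 0) {s₀ : n} (hs₀ : s₀ ∈ S) (k : ℕ) :
    ∃ s ∈ S, ∀ t ≠ s, (A ^ k) s₀ t = 0 := by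
  induction k with
  | zero => exact ⟨s₀, hs₀, fun t ht => Matrix.one_apply_ne' ht⟩
  | succ k ih =>
    obtain ⟨s, hs, hrow⟩ := ih
    obtain ⟨s', hs', hsucc⟩ := hS s hs
    refine ⟨s', hs', fun t ht => ?_⟩
    rw [pow_succ, Matrix.mul_apply,
      Finset.sum_eq_single s (fun r _ hr => by simp [hrow r hr]) (by simp), hsucc t ht, mul_zero]

theorem Matrix.not_forall_exists_unique_succ_of_pow_ne_zero
    (hprim : ∃ k : ℕ, ∀ i j, (A ^ k) i j ≠ 0) (hn : 1 < Fintype.card n) {S : Set n}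
    (hne : S.Nonempty) : ¬ ∀ s ∈ S, ∃ s' ∈ S, ∀ t ≠ s', A s t = 0 := by
  intro hS
  obtain ⟨s₀, hs₀⟩ := hne
  obtain ⟨k, hk⟩ := hprim
  obtain ⟨s, -, hrow⟩ := A.exists_mem_forall_pow_apply_eq_zero hS hs₀ k
  obtain ⟨t, ht⟩ := Fintype.exists_ne_of_one_lt_card hn s
  exact hk s₀ t (hrow t ht)

theorem Matrix.exists_mem_Ico_exists_ne_apply_ne_zero
    (hprim : ∃ k : ℕ, ∀ i j, (A ^ k) i j ≠ 0) (hn : 1 < Fintype.card n) (ν : ℕ → n) (i : ℕ) :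
    ∃ j ∈ Ico i (i + (Fintype.card n + 1)), ∃ t ≠ ν (j + 1), A (ν j) t ≠ 0 := by
  by_contra! hdet
  have hcard : #(univ : Finset n) < #(Ico i (i + (Fintype.card n + 1))) := by simp
  obtain ⟨a, ha, b, hb, hne, hab⟩ :=
    exists_ne_map_eq_of_card_lt_of_maps_to hcard (fun x _ => mem_univ (ν x))
  wlog hlt : a < b generalizing a b
  · exact this b hb a ha hne.symm hab.symm (hne.lt_or_gt.resolve_left hlt)
  refine A.not_forall_exists_unique_succ_of_pow_ne_zero hprim hn
    (S := ν '' Set.Ico a b) ⟨ν a, a, ⟨le_rfl, hlt⟩, rfl⟩ ?_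
  rintro _ ⟨j, ⟨haj, hjb⟩, rfl⟩
  have hj : j ∈ Ico i (i + (Fintype.card n + 1)) := by
    simp only [mem_Ico] at ha hb ⊢; omega
  rcases (Nat.succ_le_of_lt hjb).lt_or_eq with hnext | hlast
  · exact ⟨ν (j + 1), ⟨j + 1, ⟨by omega, hnext⟩, rfl⟩, hdet j hj⟩
  · -- the step `j → b` closes the cycle, since `ν b = ν a`
    exact ⟨ν a, ⟨a, ⟨le_rfl, hlt⟩, rfl⟩, by rw [hab, ← hlast]; exact hdet j hj⟩

end UniqueSuccessor

theorem Matrix.apply_eq_zero_of_mul_div_eq_one {n : Type*} [Fintype n] [DecidableEq n]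
    {A : Matrix n n ℝ} (hA : ∀ i j, 0 ≤ A i j) {u : n → ℝ} (hu : ∀ i, 0 < u i) {i j k : n}
    {r : ℝ} (hAu : ∑ l, A i l * u l = r) (h : A i j * u j / r = 1) (hk : k ≠ j) :
    A i k = 0 := by
  have hr : r ≠ 0 := by rintro rfl; simp at h
  have hrest : ∑ l ∈ univ.erase j, A i l * u l = 0 := by
    rw [← add_sum_erase _ _ (mem_univ j), (div_eq_one_iff_eq hr).mp h] at hAu
    linarith
  have hk0 := (sum_eq_zero_iff_of_nonneg fun l _ => mul_nonneg (hA i l) (hu l).le).mp hrest k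
    (mem_erase.mpr ⟨hk, mem_univ k⟩)
  exact (mul_eq_zero.mp hk0).resolve_right (hu k).ne'

theorem Nat.div_le_card_filter_range_of_forall_exists_mem_Ico {p : ℕ → Prop}
    [DecidablePred p] {L M : ℕ} (h : ∀ i, i + L ≤ M → ∃ j ∈ Ico i (i + L), p j) :
    M / L ≤ #((range M).filter p) := by
  rcases Nat.eq_zero_or_pos L with rfl | hL
  · simp
  induction M using Nat.strong_induction_on with
  | _ M ih =>
    rcases lt_or_ge M L with hML | hLM
    · simp [Nat.div_eq_of_lt hML]
    obtain ⟨j, hj, hpj⟩ := h (M - L) (by omega)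
    rw [mem_Ico] at hj
    have hprev := ih (M - L) (by omega) fun i hi => h i (by omega)
    have hsub : (range (M - L)).filter p ⊂ (range M).filter p :=
      (ssubset_iff_of_subset (filter_subset_filter _ (range_subset_range.mpr (M.sub_le L)))).mpr
        ⟨j, mem_filter.mpr ⟨mem_range.mpr (by omega), hpj⟩, fun hj' => by
          have := mem_range.mp (mem_filter.mp hj').1; omega⟩
    have := card_lt_card hsub
    rw [Nat.div_eq_sub_div hL hLM]
    omega

theorem monochains_general (N : ℕ) (A : Matrix (Fin N) (Fin N) ℝ)
    (h01 : ∀ i j, A i j = 0 ∨ A i j = 1)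
    (hprim : ∃ k : ℕ, ∀ i j, 0 < (A ^ k) i j)
    (u : Fin N → ℝ) (lamMax : ℝ) (hu : ∀ i, 0 < u i)
    (hAu : ∀ i, ∑ j, A i j * u j = lamMax * u i)
    (P : Fin N → Fin N → ℝ) (hP : ∀ i j, P i j = A i j * u j / (lamMax * u i))
    (ν : ℕ → Fin N) (m : ℕ) (hm : 3 * (N + 1) < m)
    (hbranch : 2 ≤ (Finset.univ.filter (fun i => A (ν (m - 1)) i = 1)).card) :
    (m : ℝ) / (3 * (N + 1)) <
      (((Finset.range (m - 1)).filter (fun i => P (ν i) (ν (i + 1)) ≠ 1)).card : ℝ) := by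
  have hN : 1 < Fintype.card (Fin N) := one_lt_two.trans_le (hbranch.trans (card_filter_le _ _))
  have hA : ∀ i j, 0 ≤ A i j := fun i j => (h01 i j).elim (·.ge) (· ▸ zero_le_one)
  have hprim' : ∃ k : ℕ, ∀ i j, (A ^ k) i j ≠ 0 :=
    hprim.imp fun _ hk i j => (hk i j).ne'
  have hcount :
      (m - 1) / (N + 1) ≤ #((range (m - 1)).filter fun i => P (ν i) (ν (i + 1)) ≠ 1) := by
    refine Nat.div_le_card_filter_range_of_forall_exists_mem_Ico fun i _ => ?_
    obtain ⟨j, hj, t, ht, hAt⟩ := A.exists_mem_Ico_exists_ne_apply_ne_zero hprim' hN ν i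
    rw [Fintype.card_fin] at hj
    exact ⟨j, hj, fun hP1 => hAt <|
      A.apply_eq_zero_of_mul_div_eq_one hA hu (hAu _) (hP _ _ ▸ hP1) ht⟩
  have hq : 1 ≤ (m - 1) / (N + 1) := (Nat.le_div_iff_mul_le (by omega)).mpr (by omega)
  have hm' : m < 3 * (N + 1) * ((m - 1) / (N + 1)) := by
    have := Nat.lt_div_mul_add (a := m - 1) (show 0 < N + 1 by omega)
    have := Nat.mul_le_mul_right (N + 1) hq
    rw [mul_assoc, mul_comm (N + 1)]
    omega
  rw [div_lt_iff₀ (by positivity), mul_comm]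
  exact_mod_cast hm'.trans_le (Nat.mul_le_mul_left _ hcount)

/-- monochains lemma: If ν is an admissible word of length m > 3(N+1)
(encoded as ν 0, ..., ν (m−1)) whose last letter has at least two admissible successors,
then the number of indices i ∈ {0,...,m−2} with Parry transition probability
P_{ν_i, ν_{i+1}} ≠ 1 is strictly greater than m / (3(N+1)). -/
theorem monochains (N : ℕ) (A : Matrix (Fin N) (Fin N) ℝ)
    (h01 : ∀ i j, A i j = 0 ∨ A i j = 1)
    (hprim : ∃ k : ℕ, ∀ i j, 0 < (A ^ k) i j)
    (u : Fin N → ℝ) (lamMax : ℝ) (hlam : 0 < lamMax) (hu : ∀ i, 0 < u i)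
    (hAu : ∀ i, ∑ j, A i j * u j = lamMax * u i)
    (P : Fin N → Fin N → ℝ) (hP : ∀ i j, P i j = A i j * u j / (lamMax * u i))
    (ν : ℕ → Fin N) (m : ℕ) (hm : 3 * (N + 1) < m)
    (hadm : ∀ i, i + 1 < m → A (ν i) (ν (i + 1)) = 1)
    (hbranch : 2 ≤ (Finset.univ.filter (fun i => A (ν (m - 1)) i = 1)).card) :
    (m : ℝ) / (3 * (N + 1)) <
      (((Finset.range (m - 1)).filter (fun i => P (ν i) (ν (i + 1)) ≠ 1)).card : ℝ) :=
  monochains_general N A h01 hprim u lamMax hu hAu P hP ν m hm hbranch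
end

section
/- Eigenvalue comparability for the log-Laplacian eigenvalues: there exist constants 0 < C_0 ≤ C_1 such that for every nonempty admissible word β and every admissible word ν properly extending β with its last letter having at least two admissible successors, the quantity λ_β^A(ν) := 1 + λ_max v_{ν_1} Σ_{k=0}^{|ν|−|β|−1} u_{ν_{|ν|−k−1}}(1 − P_{ν_{|ν|−k−1}, ν_{|ν|−k}}) satisfies C_0(|ν| − |β|) ≤ λ_β^A(ν) ≤ C_1(|ν| − |β|). -/
open scoped Classical

/-- The monochains lemma: in an admissible word whose last letter has at least two
admissible successors, any window of `N` consecutive steps contains a step where `P ≠ 1`. -/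
lemma monochain_aux {N : ℕ} (A : Matrix (Fin N) (Fin N) ℝ)
    (P : Fin N → Fin N → ℝ)
    (hdet : ∀ i j j', P i j = 1 → A i j' = 1 → j' = j)
    (ν : ℕ → Fin N) (lν : ℕ)
    (hadm : ∀ i, i + 1 < lν → A (ν i) (ν (i + 1)) = 1)
    (hbr : 2 ≤ (Finset.univ.filter (fun i => A (ν (lν - 1)) i = 1)).card)
    (j : ℕ) (hj : j + N + 1 ≤ lν) :
    ∃ t, t < N ∧ P (ν (j + t)) (ν (j + t + 1)) ≠ 1 := by
  by_contra hcon
  push_neg at hcon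
  -- pigeonhole: two equal letters among ν j, ..., ν (j+N)
  obtain ⟨a, ha, b, hb, hab, heq⟩ :=
    Finset.exists_ne_map_eq_of_card_lt_of_maps_to
      (s := Finset.range (N + 1)) (t := (Finset.univ : Finset (Fin N)))
      (by simp) (fun a _ => Finset.mem_univ (ν (j + a)))
  rw [Finset.mem_range] at ha hb
  suffices H : ∀ a b : ℕ, a < b → b ≤ N → ν (j + a) = ν (j + b) → False by
    rcases lt_or_gt_of_ne hab with h | h
    · exact H a b h (by omega) heq
    · exact H b a h (by omega) heq.symm
  clear hab heq ha hb a b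
  intro a b hlt hbN heq
  set p := b - a with hp
  have hp0 : 0 < p := by omega
  have L : ∀ s, j + b + s ≤ lν - 1 → ν (j + b + s) = ν (j + a + s % p) := by
    intro s
    induction s with
    | zero =>
      intro _
      simpa using heq.symm
    | succ s ih =>
      intro hs
      have ih' := ih (by omega)
      have hr : s % p < p := Nat.mod_lt _ hp0
      set r := s % p with hrdef
      have ht : a + r < N := by omega
      have h1 : P (ν (j + a + r)) (ν (j + a + r + 1)) = 1 := by
        have := hcon (a + r) ht
        have e : j + (a + r) = j + a + r := by omega
        rwa [e] at this
      have h2 : A (ν (j + b + s)) (ν (j + b + s + 1)) = 1 :=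
        hadm _ (by omega)
      rw [ih'] at h2
      have h3 : ν (j + b + s + 1) = ν (j + a + r + 1) := hdet _ _ _ h1 h2
      have e1 : j + b + (s + 1) = j + b + s + 1 := by omega
      rw [e1, h3]
      rcases eq_or_lt_of_le (Nat.succ_le_of_lt hr) with hrp | hrp
      · -- r + 1 = p
        have hdvd : p ∣ s + 1 := by
          refine ⟨s / p + 1, ?_⟩
          have h1' := Nat.div_add_mod s p
          have h2' : p * (s / p + 1) = p * (s / p) + p := by ring
          omega
        have hz : (s + 1) % p = 0 := Nat.mod_eq_zero_of_dvd hdvd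
        rw [hz]
        have e2 : j + a + r + 1 = j + b := by omega
        rw [e2]
        simpa using heq.symm
      · -- r + 1 < p
        have hmod : (s + 1) % p = r + 1 := by
          have hd := Nat.div_add_mod s p
          have e2 : s + 1 = p * (s / p) + (r + 1) := by omega
          rw [e2, Nat.mul_add_mod, Nat.mod_eq_of_lt hrp]
        rw [hmod]
        have e3 : j + a + (r + 1) = j + a + r + 1 := by omega
        rw [e3]
  -- apply L at the end of the word
  have hb1 : j + b ≤ lν - 1 := by omega
  have hL := L (lν - 1 - (j + b)) (by omega)
  have e : j + b + (lν - 1 - (j + b)) = lν - 1 := by omega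
  rw [e] at hL
  set r := (lν - 1 - (j + b)) % p with hrdef
  have hr : r < p := Nat.mod_lt _ hp0
  have ht : a + r < N := by omega
  have h1 : P (ν (j + a + r)) (ν (j + a + r + 1)) = 1 := by
    have := hcon (a + r) ht
    have e' : j + (a + r) = j + a + r := by omega
    rwa [e'] at this
  have hsub : (Finset.univ.filter (fun i => A (ν (lν - 1)) i = 1))
      ⊆ {ν (j + a + r + 1)} := by
    intro x hx
    rw [Finset.mem_filter] at hx
    rw [Finset.mem_singleton]
    have hAx : A (ν (j + a + r)) x = 1 := by rw [← hL]; exact hx.2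
    exact hdet _ _ _ h1 hAx
  have := Finset.card_le_card hsub
  rw [Finset.card_singleton] at this
  omega

/-- Eigenvalue comparability for the log-Laplacian eigenvalues: there are
constants 0 < C₀ ≤ C₁ such that for every nonempty admissible word β that is a proper
prefix of an admissible word ν (encoded as initial segments of ν : ℕ → Fin N of lengths
lβ < lν) whose last letter has at least two admissible successors, the eigenvalue
λ_β^A(ν) = 1 + λ_max v_{ν_1} Σ_{k=0}^{|ν|−|β|−1} u_{ν_{|ν|−k−1}}(1 − P_{ν_{|ν|−k−1},ν_{|ν|−k}})
satisfies C₀(|ν| − |β|) ≤ λ_β^A(ν) ≤ C₁(|ν| − |β|). -/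
theorem eigenvalue_comparability (N : ℕ) (A : Matrix (Fin N) (Fin N) ℝ)
    (h01 : ∀ i j, A i j = 0 ∨ A i j = 1)
    (hprim : ∃ k : ℕ, ∀ i j, 0 < (A ^ k) i j)
    (u v : Fin N → ℝ) (lamMax : ℝ) (hlamMax : 1 < lamMax)
    (hu : ∀ i, 0 < u i) (hv : ∀ i, 0 < v i)
    (hAu : ∀ i, ∑ j, A i j * u j = lamMax * u i)
    (hAv : ∀ j, ∑ i, v i * A i j = lamMax * v j)
    (hnorm : ∑ i, u i * v i = 1)
    (P : Fin N → Fin N → ℝ) (hP : ∀ i j, P i j = A i j * u j / (lamMax * u i)) :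
    ∃ C₀ C₁ : ℝ, 0 < C₀ ∧ C₀ ≤ C₁ ∧
      ∀ (ν : ℕ → Fin N) (lν lβ : ℕ), 1 ≤ lβ → lβ < lν →
        (∀ i, i + 1 < lν → A (ν i) (ν (i + 1)) = 1) →
        2 ≤ (Finset.univ.filter (fun i => A (ν (lν - 1)) i = 1)).card →
        C₀ * ((lν : ℝ) - lβ) ≤
            1 + lamMax * v (ν 0) * ∑ k ∈ Finset.range (lν - lβ),
              u (ν (lν - k - 2)) * (1 - P (ν (lν - k - 2)) (ν (lν - k - 1))) ∧
          1 + lamMax * v (ν 0) * ∑ k ∈ Finset.range (lν - lβ),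
              u (ν (lν - k - 2)) * (1 - P (ν (lν - k - 2)) (ν (lν - k - 1))) ≤
            C₁ * ((lν : ℝ) - lβ) := by
  rcases Nat.eq_zero_or_pos N with hN | hN
  · subst hN
    exact ⟨1, 1, one_pos, le_refl 1, fun ν _ _ _ _ _ _ => (ν 0).elim0⟩
  have hlam0 : (0:ℝ) < lamMax := lt_trans one_pos hlamMax
  haveI : Nonempty (Fin N) := ⟨⟨0, hN⟩⟩
  -- basic facts about P
  have Pnn : ∀ i j, 0 ≤ P i j := by
    intro i j
    rw [hP]
    rcases h01 i j with h | h
    · simp [h]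
    · rw [h, one_mul]
      exact le_of_lt (div_pos (hu j) (mul_pos hlam0 (hu i)))
  have Prow : ∀ i, ∑ j, P i j = 1 := by
    intro i
    have : ∑ j, P i j = (∑ j, A i j * u j) / (lamMax * u i) := by
      rw [Finset.sum_div]
      exact Finset.sum_congr rfl fun j _ => hP i j
    rw [this, hAu i, div_self (ne_of_gt (mul_pos hlam0 (hu i)))]
  have Ple1 : ∀ i j, P i j ≤ 1 := by
    intro i j
    have := Finset.single_le_sum (fun k _ => Pnn i k) (Finset.mem_univ j)
    rwa [Prow i] at this
  have hdet : ∀ i j j', P i j = 1 → A i j' = 1 → j' = j := by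
    intro i j j' h1 hA
    by_contra hne
    have hPj' : 0 < P i j' := by
      rw [hP i j', hA, one_mul]
      exact div_pos (hu j') (mul_pos hlam0 (hu i))
    have hle : P i j + P i j' ≤ ∑ k, P i k := by
      rw [← Finset.sum_pair (fun h => hne h.symm : j ≠ j')]
      exact Finset.sum_le_sum_of_subset_of_nonneg (Finset.subset_univ _)
        (fun k _ _ => Pnn i k)
    rw [Prow i, h1] at hle
    linarith
  -- extremal constants
  obtain ⟨iu, -, hiu⟩ := Finset.exists_max_image Finset.univ u Finset.univ_nonempty
  obtain ⟨iv, -, hiv⟩ := Finset.exists_max_image Finset.univ v Finset.univ_nonempty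
  obtain ⟨iw, -, hiw⟩ := Finset.exists_min_image Finset.univ v Finset.univ_nonempty
  obtain ⟨pm, -, hpm⟩ := Finset.exists_min_image Finset.univ
    (fun p : Fin N × Fin N => if P p.1 p.2 = 1 then 1 else u p.1 * (1 - P p.1 p.2))
    Finset.univ_nonempty
  set δ : ℝ := if P pm.1 pm.2 = 1 then 1 else u pm.1 * (1 - P pm.1 pm.2) with hδdef
  have hδ : 0 < δ := by
    rw [hδdef]
    split
    · exact one_pos
    · next h =>
      have : P pm.1 pm.2 < 1 := lt_of_le_of_ne (Ple1 _ _) h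
      have := hu pm.1
      nlinarith
  have hδg : ∀ i j, P i j ≠ 1 → δ ≤ u i * (1 - P i j) := by
    intro i j h
    have := hpm (i, j) (Finset.mem_univ _)
    simpa [if_neg h] using this
  set c : ℝ := lamMax * v iw * δ with hcdef
  have hc : 0 < c := mul_pos (mul_pos hlam0 (hv iw)) hδ
  refine ⟨min 1 c / (2 * N), 1 + lamMax * v iv * u iu, ?_, ?_, ?_⟩
  · have : (0:ℝ) < (N:ℝ) := by exact_mod_cast hN
    positivity
  · have hN1 : (1:ℝ) ≤ (N:ℝ) := by exact_mod_cast hN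
    have h1 : min 1 c ≤ 1 := min_le_left _ _
    have h2 : (0:ℝ) < lamMax * v iv * u iu :=
      mul_pos (mul_pos hlam0 (hv iv)) (hu iu)
    have : min 1 c / (2 * N) ≤ 1 := by
      rw [div_le_one (by linarith)]
      linarith
    linarith
  intro ν lν lβ hlβ hlt hadm hbr
  have hcast : (lν : ℝ) - (lβ : ℝ) = ((lν - lβ : ℕ) : ℝ) := (Nat.cast_sub hlt.le).symm
  rw [hcast]
  set m := lν - lβ with hm
  have hm1 : 1 ≤ m := by omega
  have hmlν : m + 1 ≤ lν := by omega
  set f : ℕ → ℝ := fun k => u (ν (lν - k - 2)) * (1 - P (ν (lν - k - 2)) (ν (lν - k - 1)))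
    with hfdef
  have hf0 : ∀ k, 0 ≤ f k := by
    intro k
    have := Ple1 (ν (lν - k - 2)) (ν (lν - k - 1))
    have := hu (ν (lν - k - 2))
    simp only [hfdef]
    nlinarith
  have hfu : ∀ k, f k ≤ u iu := by
    intro k
    simp only [hfdef]
    have h1 := Ple1 (ν (lν - k - 2)) (ν (lν - k - 1))
    have h2 := Pnn (ν (lν - k - 2)) (ν (lν - k - 1))
    have h3 := hiu (ν (lν - k - 2)) (Finset.mem_univ _)
    have h4 := hu (ν (lν - k - 2))
    nlinarith
  set S : ℝ := ∑ k ∈ Finset.range m, f k with hSdef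
  have hS0 : 0 ≤ S := Finset.sum_nonneg fun k _ => hf0 k
  -- lower bound for S via the monochains lemma
  set D : ℕ := m / N with hD
  have hex : ∀ q : ℕ, ∃ k : ℕ, q < D → k < m ∧ k / N = q ∧ δ ≤ f k := by
    intro q
    by_cases hq : q < D
    · have hqm : q * N + N ≤ m := by
        calc q * N + N = (q + 1) * N := by ring
          _ ≤ D * N := Nat.mul_le_mul_right N hq
          _ ≤ m := Nat.div_mul_le_self m N
      set Q := q * N with hQ
      have hjN : (lν - Q - N - 1) + N + 1 ≤ lν := by omega
      obtain ⟨t, htN, htP⟩ := monochain_aux A P hdet ν lν hadm hbr (lν - Q - N - 1) hjN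
      refine ⟨Q + (N - 1 - t), fun _ => ⟨by omega, ?_, ?_⟩⟩
      · have e : Q + (N - 1 - t) = N * q + (N - 1 - t) := by rw [hQ]; ring
        rw [e, Nat.mul_add_div hN, Nat.div_eq_of_lt (by omega)]
        omega
      · have e1 : lν - (Q + (N - 1 - t)) - 2 = (lν - Q - N - 1) + t := by omega
        have e2 : lν - (Q + (N - 1 - t)) - 1 = (lν - Q - N - 1) + t + 1 := by omega
        simp only [hfdef]
        rw [e1, e2]
        exact hδg _ _ htP
    · exact ⟨0, fun h => absurd h hq⟩
  choose ch hch using hex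
  have hSd : δ * (D : ℝ) ≤ S := by
    have hinj : ∀ q ∈ Finset.range D, ∀ q' ∈ Finset.range D,
        ch q = ch q' → q = q' := by
      intro q hq q' hq' he
      have h1 := (hch q (Finset.mem_range.1 hq)).2.1
      have h2 := (hch q' (Finset.mem_range.1 hq')).2.1
      rw [← h1, ← h2, he]
    have hsub : (Finset.range D).image ch ⊆ Finset.range m := by
      intro x hx
      obtain ⟨q, hq, rfl⟩ := Finset.mem_image.1 hx
      exact Finset.mem_range.2 (hch q (Finset.mem_range.1 hq)).1
    calc δ * (D : ℝ) = ∑ _q ∈ Finset.range D, δ := by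
          rw [Finset.sum_const, Finset.card_range, nsmul_eq_mul, mul_comm]
      _ ≤ ∑ q ∈ Finset.range D, f (ch q) :=
          Finset.sum_le_sum fun q hq => (hch q (Finset.mem_range.1 hq)).2.2
      _ = ∑ k ∈ (Finset.range D).image ch, f k := (Finset.sum_image hinj).symm
      _ ≤ S := Finset.sum_le_sum_of_subset_of_nonneg hsub fun k _ _ => hf0 k
  have hmD : (m : ℝ) ≤ (N : ℝ) * (D : ℝ) + (N : ℝ) := by
    have h1 := Nat.div_add_mod m N
    rw [← hD] at h1
    have h2 : m % N < N := Nat.mod_lt _ hN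
    have : m ≤ N * D + N := by omega
    exact_mod_cast this
  have hv0min := hiw (ν 0) (Finset.mem_univ _)
  have hv0max := hiv (ν 0) (Finset.mem_univ _)
  constructor
  · -- lower bound
    have h1 : c * (D : ℝ) ≤ lamMax * v (ν 0) * S := by
      have hD0 : (0:ℝ) ≤ δ * (D : ℝ) := mul_nonneg hδ.le (Nat.cast_nonneg _)
      have := mul_le_mul (mul_le_mul_of_nonneg_left hv0min hlam0.le) hSd hD0
        (mul_nonneg hlam0.le (hv (ν 0)).le)
      calc c * (D : ℝ) = lamMax * v iw * (δ * (D : ℝ)) := by rw [hcdef]; ring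
        _ ≤ lamMax * v (ν 0) * S := this
    have hN1 : (1:ℝ) ≤ (N:ℝ) := by exact_mod_cast hN
    have hDR : (0:ℝ) ≤ (D:ℝ) := Nat.cast_nonneg _
    have key : min 1 c / (2 * N) * (m : ℝ) ≤ 1 + c * (D : ℝ) := by
      rw [div_mul_eq_mul_div, div_le_iff₀ (by linarith : (0:ℝ) < 2 * N)]
      have e1 : min 1 c * (m : ℝ) ≤ min 1 c * ((N:ℝ) * D + N) :=
        mul_le_mul_of_nonneg_left hmD (le_of_lt (lt_min one_pos hc))
      have e2 : min 1 c * ((N:ℝ) * D) ≤ c * ((N:ℝ) * D) :=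
        mul_le_mul_of_nonneg_right (min_le_right _ _)
          (mul_nonneg (by linarith) hDR)
      have e3 : min 1 c * (N:ℝ) ≤ 1 * (N:ℝ) :=
        mul_le_mul_of_nonneg_right (min_le_left _ _) (by linarith)
      have e4 : (0:ℝ) ≤ c * (D:ℝ) * (N:ℝ) := by positivity
      nlinarith
    linarith
  · -- upper bound
    have hSle : S ≤ (m : ℝ) * u iu := by
      calc S ≤ ∑ _k ∈ Finset.range m, u iu := Finset.sum_le_sum fun k _ => hfu k
        _ = (m : ℝ) * u iu := by
          rw [Finset.sum_const, Finset.card_range, nsmul_eq_mul]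
    have h1 : lamMax * v (ν 0) * S ≤ lamMax * v iv * ((m:ℝ) * u iu) :=
      mul_le_mul (mul_le_mul_of_nonneg_left hv0max hlam0.le) hSle hS0
        (mul_nonneg hlam0.le (hv iv).le)
    have h2 : lamMax * v iv * ((m:ℝ) * u iu) = lamMax * v iv * u iu * (m:ℝ) := by ring
    have hm1R : (1:ℝ) ≤ (m:ℝ) := by exact_mod_cast hm1
    have h3 : (0:ℝ) < lamMax * v iv * u iu := mul_pos (mul_pos hlam0 (hv iv)) (hu iu)
    nlinarith
end
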